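/- arXiv:2403.18644 — 3 statements merged into one kernel-verified Lean document; each statement's English description precedes it below -/
import Mathlib

section
/- Let A, B be self-adjoint compact operators on a Hilbert space, and write A ≤_fin B if B − A has only finitely many negative eigenvalues, i.e., the spectral subspace of B − A corresponding to (−∞, 0) is finite dimensional. Then ≤_fin is transitive: if A ≤_fin B and B ≤_fin C, then A ≤_fin C. -/
open scoped InnerProductSpace

/-- A bounded operator `T` on a Hilbert space has (at most) finitely many negative
eigenvalues: there is a finite-dimensional subspace `V` such that the quadratic form of
`T` is nonnegative on `V^⊥`. -/
def HasFinitelyManyNegativeEigenvalues {H : Type*} [NormedAddCommGroup H]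
    [InnerProductSpace ℂ H] (T : H →L[ℂ] H) : Prop :=
  ∃ V : Submodule ℂ H, FiniteDimensional ℂ V ∧ ∀ x ∈ Vᗮ, 0 ≤ (⟪T x, x⟫_ℂ).re

/-- The relation `A ≤_fin B` (meaning `B − A` has finitely many negative eigenvalues) is
transitive on self-adjoint compact operators: if `A ≤_fin B` and `B ≤_fin C`, then
`A ≤_fin C`. -/
theorem le_fin_trans {H : Type*} [NormedAddCommGroup H] [InnerProductSpace ℂ H]
    [CompleteSpace H] (A B C : H →L[ℂ] H)
    (hAc : IsCompactOperator (⇑A)) (hBc : IsCompactOperator (⇑B))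
    (hCc : IsCompactOperator (⇑C))
    (hAsa : IsSelfAdjoint A) (hBsa : IsSelfAdjoint B) (hCsa : IsSelfAdjoint C)
    (hAB : HasFinitelyManyNegativeEigenvalues (B - A))
    (hBC : HasFinitelyManyNegativeEigenvalues (C - B)) :
    HasFinitelyManyNegativeEigenvalues (C - A) := by
  obtain ⟨V, hVfd, hV⟩ := hAB
  obtain ⟨W, hWfd, hW⟩ := hBC
  refine ⟨V ⊔ W, Submodule.finiteDimensional_sup V W, fun x hx => ?_⟩
  have hxV : x ∈ Vᗮ := (Submodule.orthogonal_le le_sup_left) hx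
  have hxW : x ∈ Wᗮ := (Submodule.orthogonal_le le_sup_right) hx
  have h1 := hV x hxV
  have h2 := hW x hxW
  have key : ((C - A) x : H) = (C - B) x + (B - A) x := by
    simp [ContinuousLinearMap.sub_apply]
  rw [key, inner_add_left, Complex.add_re]
  linarith
end

section
/- If T is a bounded operator on a complex Hilbert space that is the sum of a coercive self-adjoint operator S (⟨Sx, x⟩ ≥ β‖x‖² for some β > 0) and a self-adjoint compact operator K, then the spectral subspace of T = S + K corresponding to (−∞, 0) is finite dimensional; i.e., T has at most finitely many negative eigenvalues counted with multiplicity. -/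
open scoped InnerProductSpace

/-- If `T = S + K` with `S` coercive self-adjoint and `K` compact self-adjoint, then `T`
has at most finitely many negative eigenvalues. -/
theorem coercive_plus_compact_finitely_many_negative {H : Type*} [NormedAddCommGroup H]
    [InnerProductSpace ℂ H] [CompleteSpace H] (S K : H →L[ℂ] H)
    (hSsa : IsSelfAdjoint S) (hKsa : IsSelfAdjoint K) (hKc : IsCompactOperator (⇑K))
    (β : ℝ) (hβ : 0 < β) (hcoercive : ∀ x : H, β * ‖x‖ ^ 2 ≤ (⟪S x, x⟫_ℂ).re) :
    HasFinitelyManyNegativeEigenvalues (S + K) := by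
  -- compact image of the closed unit ball
  obtain ⟨M, hMc, hMsub⟩ :=
    (isCompactOperator_iff_image_closedBall_subset_compact (K : H →ₗ[ℂ] H) one_pos).mp hKc
  -- finite β-net
  obtain ⟨t, -, htfin, htsub⟩ := hMc.finite_cover_balls hβ
  refine ⟨Submodule.span ℂ t, FiniteDimensional.span_of_finite ℂ htfin, ?_⟩
  intro x hx
  have key : -(β * ‖x‖ ^ 2) ≤ (⟪K x, x⟫_ℂ).re := by
    rcases eq_or_ne x 0 with rfl | hx0
    · simp
    · have hxnorm : (0:ℝ) < ‖x‖ := norm_pos_iff.mpr hx0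
      set u : H := ((‖x‖ : ℂ))⁻¹ • x with hu
      have hunorm : ‖u‖ = 1 := by
        rw [hu, norm_smul, norm_inv, Complex.norm_real, norm_norm,
          inv_mul_cancel₀ hxnorm.ne']
      have hKu : K u ∈ M := hMsub ⟨u, by simp [hunorm], rfl⟩
      obtain ⟨y, hyt, hy⟩ := Set.mem_iUnion₂.mp (htsub hKu)
      have hyV : y ∈ Submodule.span ℂ t := Submodule.subset_span hyt
      have hyu : ⟪y, u⟫_ℂ = 0 := by
        rw [hu, inner_smul_right, hx y hyV, mul_zero]
      have h2 : -β ≤ (⟪K u, u⟫_ℂ).re := by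
        have h1 : (⟪K u, u⟫_ℂ).re = (⟪K u - y, u⟫_ℂ).re := by
          rw [inner_sub_left, hyu, sub_zero]
        rw [h1]
        have hb : ‖⟪K u - y, u⟫_ℂ‖ ≤ β := by
          calc ‖⟪K u - y, u⟫_ℂ‖ ≤ ‖K u - y‖ * ‖u‖ := norm_inner_le_norm _ _
            _ ≤ β * 1 :=
                mul_le_mul (le_of_lt (by simpa [dist_eq_norm] using hy))
                  hunorm.le (norm_nonneg _) hβ.le
            _ = β := mul_one β
        have := abs_le.mp ((Complex.abs_re_le_norm _).trans hb)
        linarith [this.1]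
      have hxu : x = ((‖x‖ : ℂ)) • u := by
        rw [hu, smul_smul, mul_inv_cancel₀ (by exact_mod_cast hxnorm.ne'), one_smul]
      have hKx : ⟪K x, x⟫_ℂ = ((‖x‖^2 : ℝ) : ℂ) * ⟪K u, u⟫_ℂ := by
        conv_lhs => rw [hxu]
        rw [map_smul, inner_smul_left, inner_smul_right, Complex.conj_ofReal]
        push_cast
        ring
      have hre : (⟪K x, x⟫_ℂ).re = ‖x‖^2 * (⟪K u, u⟫_ℂ).re := by
        rw [hKx, Complex.re_ofReal_mul]
      rw [hre]
      nlinarith [sq_nonneg ‖x‖]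
  have hS := hcoercive x
  simp only [ContinuousLinearMap.add_apply, inner_add_left, Complex.add_re]
  linarith
end

section
/- Let H₁ : Y → X₁ and H₂ : Y → X₂ be bounded linear operators between Hilbert spaces such that H₂ = R∘H₁ for some compact operator R : X₁ → X₂, and let T₁ : X₁ → X₁ be bounded such that Re(T₁) = S + K with S coercive self-adjoint and K compact self-adjoint. Then the self-adjoint operator Re(H₁* T₁ H₁) − H₂* H₂ has only finitely many negative eigenvalues, i.e., H₂* H₂ ≤_fin Re(H₁* T₁ H₁). -/
open ContinuousLinearMap
open scoped InnerProductSpace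

/-- The real part `Re(T) = (1/2)(T + T*)` of a bounded operator. -/
noncomputable def reOp {X : Type*} [NormedAddCommGroup X] [InnerProductSpace ℂ X]
    [CompleteSpace X] (T : X →L[ℂ] X) : X →L[ℂ] X :=
  (1 / 2 : ℂ) • (T + adjoint T)

lemma re_inner_reOp {X : Type*} [NormedAddCommGroup X] [InnerProductSpace ℂ X]
    [CompleteSpace X] (T : X →L[ℂ] X) (x : X) :
    (⟪reOp T x, x⟫_ℂ).re = (⟪T x, x⟫_ℂ).re := by
  have : ⟪reOp T x, x⟫_ℂ = (starRingEnd ℂ) (1/2 : ℂ) * (⟪T x, x⟫_ℂ + ⟪x, T x⟫_ℂ) := by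
    simp only [reOp, coe_smul', Pi.smul_apply, add_apply, inner_smul_left, inner_add_left,
      adjoint_inner_left]
  rw [this, ← inner_conj_symm (T x) x]
  simp [Complex.ext_iff]
  rw [show (⟪x, T x⟫_ℂ).re = (⟪T x, x⟫_ℂ).re by rw [← inner_conj_symm, Complex.conj_re]]
  ring



lemma compact_quadform_small {X : Type*} [NormedAddCommGroup X] [InnerProductSpace ℂ X]
    [CompleteSpace X] (C : X →L[ℂ] X) (hC : IsCompactOperator (⇑C)) (β : ℝ) (hβ : 0 < β) :
    ∃ W : Submodule ℂ X, FiniteDimensional ℂ W ∧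
      ∀ y ∈ Wᗮ, (⟪C y, y⟫_ℂ).re ≤ β * ‖y‖ ^ 2 := by
  by_contra hcon
  push_neg at hcon
  -- for each finite set s, pick a unit vector orthogonal to its span with large quadratic form
  have pick : ∀ s : Finset X, ∃ y : X, y ∈ (Submodule.span ℂ (s : Set X))ᗮ ∧ ‖y‖ = 1 ∧
      β < (⟪C y, y⟫_ℂ).re := by
    intro s
    obtain ⟨y, hyW, hy⟩ := hcon (Submodule.span ℂ (s : Set X)) inferInstance
    have hy0 : y ≠ 0 := by
      rintro rfl
      simp at hy
    have hny : (0:ℝ) < ‖y‖ := norm_pos_iff.mpr hy0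
    refine ⟨(‖y‖⁻¹ : ℂ) • y, Submodule.smul_mem _ _ hyW, ?_, ?_⟩
    · simp [norm_smul, inv_mul_cancel₀ hny.ne']
    · have hval : ⟪C (((‖y‖⁻¹ : ℝ) : ℂ) • y), ((‖y‖⁻¹ : ℝ) : ℂ) • y⟫_ℂ
          = ((‖y‖⁻¹ : ℝ) : ℂ) * (((‖y‖⁻¹ : ℝ) : ℂ) * ⟪C y, y⟫_ℂ) := by
        rw [map_smul, inner_smul_left, inner_smul_right, Complex.conj_ofReal]
      rw [Complex.ofReal_inv] at hval
      rw [hval, ← Complex.ofReal_inv, Complex.re_ofReal_mul, Complex.re_ofReal_mul, ← mul_assoc, ← pow_two]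
      have := (mul_lt_mul_iff_right₀ (by positivity : (0:ℝ) < (‖y‖⁻¹)^2)).mpr hy
      calc β = (‖y‖⁻¹)^2 * (β * ‖y‖^2) := by field_simp
        _ < _ := this
  choose pk hpk1 hpk2 hpk3 using pick
  -- the recursive finite sets
  classical
  let g : ℕ → Finset X := fun n => Nat.rec (∅ : Finset X) (fun _ s => insert (pk s) s) n
  have hg : ∀ n, g (n+1) = insert (pk (g n)) (g n) := fun n => rfl
  set f : ℕ → X := fun n => pk (g n) with hf
  have hmono : ∀ m n, m ≤ n → g m ⊆ g n := by
    intro m n h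
    induction h with
    | refl => exact subset_refl _
    | step h ih => exact fun x hx => by rw [hg]; exact Finset.mem_insert_of_mem (ih hx)
  have hmem : ∀ m n, m < n → f m ∈ g n := by
    intro m n h
    have : f m ∈ g (m+1) := by rw [hg]; exact Finset.mem_insert_self _ _
    exact hmono _ _ h this
  have horth : Orthonormal ℂ f := by
    rw [orthonormal_iff_ite]
    intro i j
    by_cases hij : i = j
    · subst hij
      rw [if_pos rfl, @inner_self_eq_norm_sq_to_K ℂ,
        show ‖f i‖ = 1 from hpk2 (g i)]
      norm_num
    · simp only [hij, if_false]
      rcases lt_or_gt_of_ne hij with h | h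
      · -- i < j : f j ∈ (span (g j))ᗮ and f i ∈ g j
        have := (Submodule.mem_orthogonal _ _).mp (hpk1 (g j)) (f i)
          (Submodule.subset_span (hmem i j h))
        exact this
      · have := (Submodule.mem_orthogonal _ _).mp (hpk1 (g i)) (f j)
          (Submodule.subset_span (hmem j i h))
        rw [← inner_conj_symm, this, map_zero]
  -- weak convergence to 0
  have hweak : ∀ z : X, Filter.Tendsto (fun n => ⟪f n, z⟫_ℂ) Filter.atTop (nhds 0) := by
    intro z
    have hsumm := horth.inner_products_summable z
    have h0 := hsumm.tendsto_atTop_zero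
    have : Filter.Tendsto (fun n => ‖⟪f n, z⟫_ℂ‖) Filter.atTop (nhds 0) := by
      have := h0.sqrt
      simp only [Real.sqrt_zero] at this
      refine this.congr fun n => ?_
      rw [Real.sqrt_sq_eq_abs, abs_of_nonneg (norm_nonneg _)]
    exact tendsto_zero_iff_norm_tendsto_zero.mpr this
  -- compactness: extract a convergent subsequence of C (f n)
  obtain ⟨Kc, hKc, hKim⟩ := hC.image_subset_compact_of_bounded (S := Metric.closedBall 0 1)
    Metric.isBounded_closedBall
  have hmemK : ∀ n, C (f n) ∈ Kc := by
    intro n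
    exact hKim ⟨f n, by rw [Metric.mem_closedBall, dist_zero_right]; exact (hpk2 (g n)).le, rfl⟩
  obtain ⟨c, hcK, φ, hφ, hconv⟩ := hKc.tendsto_subseq hmemK
  -- the limit is zero
  have hc0 : c = 0 := by
    have hz : ∀ z : X, ⟪c, z⟫_ℂ = 0 := by
      intro z
      have h1 : Filter.Tendsto (fun n => ⟪C (f (φ n)), z⟫_ℂ) Filter.atTop (nhds ⟪c, z⟫_ℂ) :=
        hconv.inner tendsto_const_nhds
      have h2 : Filter.Tendsto (fun n => ⟪C (f (φ n)), z⟫_ℂ) Filter.atTop (nhds 0) := by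
        have : ∀ n, ⟪C (f (φ n)), z⟫_ℂ = ⟪f (φ n), (adjoint C) z⟫_ℂ := fun n =>
          (adjoint_inner_right C _ _).symm
        simp_rw [this]
        exact (hweak _).comp (hφ.tendsto_atTop)
      exact tendsto_nhds_unique h1 h2
    simpa [inner_self_eq_zero] using hz c
  rw [hc0] at hconv
  -- but the quadratic form stays ≥ β > 0, contradiction
  have hnorm : Filter.Tendsto (fun n => ‖C (f (φ n))‖) Filter.atTop (nhds 0) := by
    simpa using hconv.norm
  have hev := hnorm.eventually (eventually_lt_nhds hβ)
  obtain ⟨n, hn⟩ := hev.exists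
  have hb : β < (⟪C (f (φ n)), f (φ n)⟫_ℂ).re := hpk3 (g (φ n))
  have : (⟪C (f (φ n)), f (φ n)⟫_ℂ).re ≤ ‖C (f (φ n))‖ := by
    calc (⟪C (f (φ n)), f (φ n)⟫_ℂ).re ≤ ‖⟪C (f (φ n)), f (φ n)⟫_ℂ‖ :=
          Complex.re_le_norm _
      _ ≤ ‖C (f (φ n))‖ * ‖f (φ n)‖ := norm_inner_le_norm _ _
      _ = ‖C (f (φ n))‖ := by rw [hpk2 (g (φ n))]; ring
  linarith


/-- If `H₂ = R ∘ H₁` with `R` compact, and `Re(T₁) = S + K` with `S` coercive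
self-adjoint and `K` compact self-adjoint, then `H₂* H₂ ≤_fin Re(H₁* T₁ H₁)`, i.e.
`Re(H₁* T₁ H₁) − H₂* H₂` has only finitely many negative eigenvalues. -/
theorem monotonicity_finitely_many_negative {Y X₁ X₂ : Type*}
    [NormedAddCommGroup Y] [InnerProductSpace ℂ Y] [CompleteSpace Y]
    [NormedAddCommGroup X₁] [InnerProductSpace ℂ X₁] [CompleteSpace X₁]
    [NormedAddCommGroup X₂] [InnerProductSpace ℂ X₂] [CompleteSpace X₂]
    (H₁ : Y →L[ℂ] X₁) (H₂ : Y →L[ℂ] X₂) (R : X₁ →L[ℂ] X₂) (T₁ : X₁ →L[ℂ] X₁)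
    (hR : IsCompactOperator (⇑R)) (hfact : H₂ = R.comp H₁)
    (S K : X₁ →L[ℂ] X₁) (hdecomp : reOp T₁ = S + K)
    (hSsa : IsSelfAdjoint S) (β : ℝ) (hβ : 0 < β)
    (hScoercive : ∀ x : X₁, β * ‖x‖ ^ 2 ≤ (⟪S x, x⟫_ℂ).re)
    (hKsa : IsSelfAdjoint K) (hKc : IsCompactOperator (⇑K))
    -- compactness of the measurement operators, as needed for the spectral statement
    (hF₁ : IsCompactOperator (⇑((adjoint H₁).comp (T₁.comp H₁))))
    (hF₂ : IsCompactOperator (⇑((adjoint H₂).comp H₂))) :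
    HasFinitelyManyNegativeEigenvalues
      (reOp ((adjoint H₁).comp (T₁.comp H₁)) - (adjoint H₂).comp H₂) := by
  obtain ⟨W, hWfin, hW⟩ := compact_quadform_small ((adjoint R).comp R - K)
    (by
      have h1 : IsCompactOperator (⇑((adjoint R).comp R)) :=
        hR.continuous_comp (adjoint R).continuous
      simpa [ContinuousLinearMap.sub_apply] using h1.sub hKc) β hβ
  refine ⟨W.map (adjoint H₁ : X₁ →ₗ[ℂ] Y), ?_, ?_⟩
  · exact Module.Finite.map W _
  · intro x hx
    set y : X₁ := H₁ x with hy
    have hyW : y ∈ Wᗮ := by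
      rw [Submodule.mem_orthogonal]
      intro w hw
      have hv : (adjoint H₁) w ∈ W.map (adjoint H₁ : X₁ →ₗ[ℂ] Y) := Submodule.mem_map_of_mem hw
      have h := (Submodule.mem_orthogonal _ x).mp hx _ hv
      rwa [adjoint_inner_left] at h
    have hkey := hW y hyW
    have hSc := hScoercive y
    have hsplit : (⟪((adjoint R).comp R - K) y, y⟫_ℂ).re
        = (⟪(adjoint R) (R y), y⟫_ℂ).re - (⟪K y, y⟫_ℂ).re := by
      simp [ContinuousLinearMap.sub_apply, inner_sub_left]
    have hreA : (⟪reOp ((adjoint H₁).comp (T₁.comp H₁)) x, x⟫_ℂ).re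
        = (⟪S y, y⟫_ℂ).re + (⟪K y, y⟫_ℂ).re := by
      rw [re_inner_reOp]
      have h1 : (⟪((adjoint H₁).comp (T₁.comp H₁)) x, x⟫_ℂ).re = (⟪T₁ y, y⟫_ℂ).re := by
        simp [ContinuousLinearMap.comp_apply, adjoint_inner_left, hy]
      rw [h1, ← re_inner_reOp T₁ y, hdecomp]
      simp [ContinuousLinearMap.add_apply, inner_add_left]
    have hreB : (⟪((adjoint H₂).comp H₂) x, x⟫_ℂ).re = (⟪(adjoint R) (R y), y⟫_ℂ).re := by
      rw [hfact]
      simp [ContinuousLinearMap.comp_apply, adjoint_inner_left, adjoint_inner_right, hy]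
    have hD : (⟪(reOp ((adjoint H₁).comp (T₁.comp H₁)) - (adjoint H₂).comp H₂) x, x⟫_ℂ).re
        = (⟪reOp ((adjoint H₁).comp (T₁.comp H₁)) x, x⟫_ℂ).re
          - (⟪((adjoint H₂).comp H₂) x, x⟫_ℂ).re := by
      simp [ContinuousLinearMap.sub_apply, inner_sub_left]
    rw [hD, hreA, hreB]
    linarith [hsplit ▸ hkey]
end
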